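/- arXiv:1506.07382 — 3 statements merged into one kernel-verified Lean document; each statement's English description precedes it below -/
import Mathlib

section
/- Let α ∈ (0,1] and p a real number with p ≥ 1 (or more generally p such that Γ(p+n) is defined). For x > 0, T_α(x^{pα}·(J_α)_p(x)) = α·x^{pα}·(J_α)_{p−1}(x), where (J_α)_q(x) = Σ_{n=0}^∞ ((−1)^n/(n!·Γ(q+n+1)))·(x^α/2)^{2n+q}. -/
open Real

noncomputable def confDeriv (α : ℝ) (f : ℝ → ℝ) (x : ℝ) : ℝ :=
  x ^ (1 - α) * deriv f x

noncomputable def confBesselJ (α q : ℝ) (x : ℝ) : ℝ :=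
  ∑' n : ℕ, ((-1 : ℝ) ^ n / ((n.factorial : ℝ) * Real.Gamma (q + n + 1)))
    * (x ^ α / 2) ^ (2 * (n : ℝ) + q)

/-!
Since `x ^ (1 - α) * d/dx = α * d/d(x ^ α)`, the substitution `s = x ^ α` turns the claim into the
classical identity `d/ds (s ^ p * J_p s) = s ^ p * J_(p-1) s`. That one follows by differentiating
the series `s ^ p * J_p s = ∑ cₙ s ^ (2p + 2n)` termwise, using `Γ(p + n + 1) = (p + n) Γ(p + n)`;
termwise differentiation is legitimate because `Γ(p + n + 1) ≥ Γ(p + 1)` makes the coefficients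
decay like `1 / n!`.
-/

open Set Filter Topology Nat

lemma rpow_add_mul_natCast_le {l u y : ℝ} (hl : 0 < l) (hy : y ∈ Icc l u) (e b : ℝ) (n : ℕ) :
    y ^ (e + b * n) ≤ (l ^ e + u ^ e) * (l ^ b + u ^ b) ^ n := by
  have hy0 : 0 < y := hl.trans_le hy.1
  have hu : 0 < u := hy0.trans_le hy.2
  have hbound : ∀ r : ℝ, y ^ r ≤ l ^ r + u ^ r := fun r ↦ by
    rcases le_total 0 r with hr | hr
    · linarith [rpow_le_rpow hy0.le hy.2 hr, rpow_nonneg hl.le r]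
    · linarith [rpow_le_rpow_of_nonpos hl hy.1 hr, rpow_nonneg hu.le r]
  rw [rpow_add hy0, rpow_mul hy0.le, rpow_natCast]
  exact mul_le_mul (hbound e) (pow_le_pow_left₀ (rpow_nonneg hy0.le b) (hbound b) n)
    (by positivity) (add_nonneg (rpow_nonneg hl.le e) (rpow_nonneg hu.le e))

lemma abs_add_mul_natCast_le (a b : ℝ) (n : ℕ) : |a + b * n| ≤ (|a| + |b|) * 2 ^ n := by
  have h2n : (n : ℝ) + 1 ≤ 2 ^ n := by exact_mod_cast Nat.lt_two_pow_self
  calc |a + b * n| ≤ |a| + |b| * n := by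
        simpa [abs_mul] using abs_add_le a (b * n)
    _ ≤ (|a| + |b|) * (n + 1) := by
        nlinarith [abs_nonneg a, abs_nonneg b, (n.cast_nonneg : (0 : ℝ) ≤ n)]
    _ ≤ (|a| + |b|) * 2 ^ n := by gcongr

theorem hasDerivAt_tsum_mul_rpow {c : ℕ → ℝ} {K a b x : ℝ} (hc : ∀ n, |c n| ≤ K / n !)
    (hx : 0 < x) :
    HasDerivAt (fun t ↦ ∑' n, c n * t ^ (a + b * n))
      (∑' n, c n * ((a + b * n) * x ^ (a + b * n - 1))) x := by
  have hK : 0 ≤ K := by simpa using (abs_nonneg _).trans (hc 0)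
  set l := x / 2
  set u := 2 * x
  have hl : 0 < l := by positivity
  have hIcc : ∀ y ∈ Ioo l u, y ∈ Icc l u := fun y hy ↦ Ioo_subset_Icc_self hy
  have hx' : x ∈ Ioo l u := ⟨half_lt_self hx, lt_two_mul_self hx⟩
  set R := l ^ b + u ^ b
  have hderiv : ∀ n y, y ∈ Ioo l u → HasDerivAt (fun t ↦ c n * t ^ (a + b * n))
      (c n * ((a + b * n) * y ^ (a + b * n - 1))) y := fun n y hy ↦
    ((hasDerivAt_rpow_const (Or.inl (hl.trans hy.1).ne')).const_mul (c n))
  have hbound : ∀ n y, y ∈ Ioo l u → ‖c n * ((a + b * n) * y ^ (a + b * n - 1))‖ ≤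
      K * (|a| + |b|) * (l ^ (a - 1) + u ^ (a - 1)) * ((2 * R) ^ n / n !) := by
    intro n y hy
    have hy0 : 0 < y := hl.trans hy.1
    have hpow := rpow_add_mul_natCast_le hl (hIcc y hy) (a - 1) b n
    rw [sub_add_eq_add_sub] at hpow
    rw [norm_mul, norm_mul, norm_of_nonneg (rpow_nonneg hy0.le _), Real.norm_eq_abs,
      Real.norm_eq_abs]
    calc |c n| * (|a + b * n| * y ^ (a + b * n - 1))
        ≤ K / n ! * ((|a| + |b|) * 2 ^ n * ((l ^ (a - 1) + u ^ (a - 1)) * R ^ n)) := by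
          gcongr
          · exact hc n
          · exact abs_add_mul_natCast_le a b n
      _ = _ := by rw [mul_pow]; ring
  have hsum : Summable fun n ↦ c n * x ^ (a + b * n) := by
    refine .of_norm_bounded
      ((summable_pow_div_factorial R).mul_left (K * (l ^ a + u ^ a))) fun n ↦ ?_
    rw [norm_mul, norm_of_nonneg (rpow_nonneg hx.le _), Real.norm_eq_abs]
    calc |c n| * x ^ (a + b * n) ≤ K / n ! * ((l ^ a + u ^ a) * R ^ n) := by
          gcongr
          · exact hc n
          · exact rpow_add_mul_natCast_le hl (hIcc x hx') a b n
      _ = _ := by ring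
  exact hasDerivAt_tsum_of_isPreconnected ((summable_pow_div_factorial (2 * R)).mul_left _)
    isOpen_Ioo isPreconnected_Ioo hderiv hbound hx' hsum hx'

lemma Gamma_add_one_le_Gamma_add_natCast_add_one {p : ℝ} (hp : 0 ≤ p) (n : ℕ) :
    Gamma (p + 1) ≤ Gamma (p + n + 1) := by
  induction n with
  | zero => simp
  | succ n ih =>
    have hpos : 0 < Gamma (p + n + 1) := Gamma_pos_of_pos (by positivity)
    rw [Nat.cast_succ, ← add_assoc, Gamma_add_one (s := p + n + 1) (by positivity)]
    nlinarith [(n.cast_nonneg : (0 : ℝ) ≤ n)]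

noncomputable def besselJ (q s : ℝ) : ℝ :=
  ∑' n : ℕ, ((-1 : ℝ) ^ n / ((n ! : ℝ) * Gamma (q + n + 1))) * (s / 2) ^ (2 * (n : ℝ) + q)

lemma confBesselJ_eq_besselJ (α q x : ℝ) : confBesselJ α q x = besselJ q (x ^ α) := rfl

lemma rpow_mul_besselJ_eq_tsum (p : ℝ) {s : ℝ} (hs : 0 < s) :
    s ^ p * besselJ p s = ∑' n : ℕ, (-1 : ℝ) ^ n /
      ((n ! : ℝ) * Gamma (p + n + 1) * 2 ^ (2 * (n : ℝ) + p)) * s ^ (2 * p + 2 * n) := by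
  rw [besselJ, ← tsum_mul_left]
  refine tsum_congr fun n ↦ ?_
  rw [div_rpow hs.le zero_le_two, show 2 * p + 2 * (n : ℝ) = p + (2 * n + p) by ring,
    rpow_add hs p]
  ring

theorem hasDerivAt_rpow_mul_besselJ {p s : ℝ} (hp : 0 < p) (hs : 0 < s) :
    HasDerivAt (fun t ↦ t ^ p * besselJ p t) (s ^ p * besselJ (p - 1) s) s := by
  set c : ℕ → ℝ := fun n ↦
    (-1 : ℝ) ^ n / ((n ! : ℝ) * Gamma (p + n + 1) * 2 ^ (2 * (n : ℝ) + p))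
  have hc : ∀ n, |c n| ≤ (Gamma (p + 1))⁻¹ / n ! := fun n ↦ by
    have hG := Gamma_add_one_le_Gamma_add_natCast_add_one hp.le n
    have hG0 : 0 < Gamma (p + 1) := Gamma_pos_of_pos (by positivity)
    have h2 : 1 ≤ (2 : ℝ) ^ (2 * (n : ℝ) + p) := one_le_rpow one_le_two (by positivity)
    have hden : (n ! : ℝ) * Gamma (p + 1) * 1 ≤ n ! * Gamma (p + n + 1) * 2 ^ (2 * (n : ℝ) + p) :=
      mul_le_mul (mul_le_mul_of_nonneg_left hG (by positivity)) h2 zero_le_one (by positivity)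
    calc |c n| = 1 / (n ! * Gamma (p + n + 1) * 2 ^ (2 * (n : ℝ) + p)) := by
          rw [abs_div, abs_pow, abs_neg, abs_one, one_pow, abs_of_pos (by positivity)]
      _ ≤ 1 / (n ! * Gamma (p + 1) * 1) := one_div_le_one_div_of_le (by positivity) hden
      _ = (Gamma (p + 1))⁻¹ / n ! := by ring
  have hterm : ∀ n : ℕ, c n * ((2 * p + 2 * n) * s ^ (2 * p + 2 * n - 1)) = s ^ p *
      ((-1 : ℝ) ^ n / ((n ! : ℝ) * Gamma (p - 1 + n + 1)) * (s / 2) ^ (2 * (n : ℝ) + (p - 1))) := by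
    intro n
    dsimp only [c]
    have hpn : p + n ≠ 0 := by positivity
    rw [show p - 1 + n + 1 = p + n by ring, Gamma_add_one hpn, div_rpow hs.le zero_le_two,
      show 2 * p + 2 * (n : ℝ) - 1 = p + (2 * n + (p - 1)) by ring, rpow_add hs,
      show 2 * (n : ℝ) + p = 2 * n + (p - 1) + 1 by ring, rpow_add_one two_ne_zero]
    have hG : Gamma (p + n) ≠ 0 := (Gamma_pos_of_pos (by positivity)).ne'
    field_simp
  have hsum := hasDerivAt_tsum_mul_rpow (a := 2 * p) (b := 2) hc hs
  simp only [hterm, tsum_mul_left] at hsum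
  refine hsum.congr_of_eventuallyEq ?_
  filter_upwards [isOpen_Ioi.mem_nhds hs] with t ht using rpow_mul_besselJ_eq_tsum p ht

theorem confDeriv_comp_rpow {α x g' : ℝ} {g : ℝ → ℝ} (hx : 0 < x)
    (hg : HasDerivAt g g' (x ^ α)) :
    confDeriv α (fun t ↦ g (t ^ α)) x = α * g' := by
  have hcomp : HasDerivAt (fun t ↦ g (t ^ α)) (g' * (α * x ^ (α - 1))) x :=
    hg.comp x (hasDerivAt_rpow_const (Or.inl hx.ne'))
  rw [confDeriv, hcomp.deriv]
  calc x ^ (1 - α) * (g' * (α * x ^ (α - 1))) = α * g' * x ^ (1 - α + (α - 1)) := by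
        rw [rpow_add hx]; ring
    _ = α * g' := by norm_num

theorem conformable_bessel_deriv_i_general (α : ℝ)
    (p : ℝ) (hp : 1 ≤ p) (x : ℝ) (hx : 0 < x) :
    confDeriv α (fun t => t ^ (p * α) * confBesselJ α p t) x
      = α * x ^ (p * α) * confBesselJ α (p - 1) x := by
  have hf : (fun t ↦ t ^ (p * α) * confBesselJ α p t) =ᶠ[𝓝 x]
      fun t ↦ (t ^ α) ^ p * besselJ p (t ^ α) := by
    filter_upwards [isOpen_Ioi.mem_nhds hx] with t ht
    rw [← rpow_mul (le_of_lt ht), mul_comm α, confBesselJ_eq_besselJ]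
  rw [confDeriv, hf.deriv_eq, ← confDeriv,
    confDeriv_comp_rpow hx (hasDerivAt_rpow_mul_besselJ (by linarith) (rpow_pos_of_pos hx α)),
    ← rpow_mul hx.le, mul_comm α p, confBesselJ_eq_besselJ]
  ring

theorem conformable_bessel_deriv_i (α : ℝ) (hα : α ∈ Set.Ioc (0:ℝ) 1)
    (p : ℝ) (hp : 1 ≤ p) (x : ℝ) (hx : 0 < x) :
    confDeriv α (fun t => t ^ (p * α) * confBesselJ α p t) x
      = α * x ^ (p * α) * confBesselJ α (p - 1) x :=
  conformable_bessel_deriv_i_general α p hp x hx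
end

section
/- Let α ∈ (0,1] and p ≥ 0 real. For x > 0, T_α(x^{−pα}·(J_α)_p(x)) = −α·x^{−pα}·(J_α)_{p+1}(x), where (J_α)_q(x) = Σ_{n=0}^∞ ((−1)^n/(n!·Γ(q+n+1)))·(x^α/2)^{2n+q}. -/
/-!
Writing `w = x^α / 2`, one has `(J_α)_q(x) = w^q · G_q(w²)` with the entire power series
`G_q(z) = Σ (-1)^n z^n / (n! Γ(q+n+1))` (`besselSeries q`), hence
`x^{-pα} (J_α)_p(x) = 2^{-p} G_p(w²)`. Termwise differentiation gives `G_p' = -G_{p+1}`, because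
`(n+1)! Γ(p+n+2) = (n+1) · n! Γ(p+1+n+1)`, and the chain rule together with
`x^{1-α} · (w²)' = α w` yields the identity.
-/

open Real

open Filter Topology FormalMultilinearSeries
open scoped Nat

theorem natCast_mul_pow_pred_mul_le {r : ℝ} (hr : 0 ≤ r) (n : ℕ) :
    n * r ^ (n - 1) * r ≤ (2 * r) ^ n := by
  rcases n with _ | n
  · simp
  · rw [mul_assoc, ← pow_succ, Nat.add_sub_cancel, mul_pow]
    gcongr
    exact_mod_cast Nat.lt_two_pow_self.le

theorem hasDerivAt_tsum_mul_pow {𝕜 : Type*} [RCLike 𝕜] {a : ℕ → 𝕜}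
    (ha : (ofScalars 𝕜 a).radius = ⊤) (z : 𝕜) :
    HasDerivAt (fun y => ∑' n, a n * y ^ n) (∑' n, (n + 1) * a (n + 1) * z ^ n) z := by
  set R : ℝ := ‖z‖ + 1
  have hR : 0 < R := by positivity
  have hsum : Summable fun n => ‖a n‖ * (2 * R) ^ n := by
    have h := (ofScalars 𝕜 a).summable_norm_mul_pow (r := ⟨2 * R, by positivity⟩)
      (by rw [ha]; exact ENNReal.coe_lt_top)
    simp only [ofScalars_norm] at h
    exact h
  have hz : z ∈ Metric.ball (0 : 𝕜) R := by simp [R]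
  have hsum_z : Summable fun n => a n * z ^ n := by
    refine Summable.of_norm_bounded hsum fun n => ?_
    rw [norm_mul, norm_pow]
    gcongr
    linarith [norm_nonneg z]
  have hbound : ∀ n, ∀ y ∈ Metric.ball (0 : 𝕜) R,
      ‖a n * (n * y ^ (n - 1))‖ ≤ ‖a n‖ * (2 * R) ^ n / R := by
    intro n y hy
    have hy : ‖y‖ ≤ R := (mem_ball_zero_iff.mp hy).le
    rw [le_div_iff₀ hR, norm_mul, norm_mul, norm_pow, RCLike.norm_natCast, mul_assoc]
    gcongr
    calc (n : ℝ) * ‖y‖ ^ (n - 1) * R ≤ n * R ^ (n - 1) * R := by gcongr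
      _ ≤ (2 * R) ^ n := natCast_mul_pow_pred_mul_le hR.le n
  have hderiv := hasDerivAt_tsum_of_isPreconnected (hsum.div_const R) Metric.isOpen_ball
    (convex_ball (0 : 𝕜) R).isPreconnected (fun n y _ => (hasDerivAt_pow n y).const_mul (a n))
    hbound hz hsum_z hz
  refine hderiv.congr_deriv ?_
  rw [(Summable.of_norm_bounded (hsum.div_const R) (fun n => hbound n z hz)).tsum_eq_zero_add]
  simp only [CharP.cast_eq_zero, zero_mul, mul_zero, zero_add, Nat.cast_add, Nat.cast_one,
    Nat.add_sub_cancel]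
  exact tsum_congr fun n => by ring

noncomputable def besselCoeff (p : ℝ) (n : ℕ) : ℝ := (-1) ^ n / (n ! * Gamma (p + n + 1))

noncomputable def besselSeries (p z : ℝ) : ℝ := ∑' n, besselCoeff p n * z ^ n

theorem besselCoeff_succ (p : ℝ) (n : ℕ) (h : p + n + 1 ≠ 0) :
    besselCoeff p (n + 1) = -besselCoeff p n / ((n + 1) * (p + n + 1)) := by
  have hΓ : Gamma (p + (n + 1 : ℕ) + 1) = (p + n + 1) * Gamma (p + n + 1) := by
    rw [← Gamma_add_one h]
    push_cast
    ring_nf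
  simp only [besselCoeff, hΓ, Nat.factorial_succ, pow_succ]
  push_cast
  rw [neg_div, div_div]
  ring

theorem succ_mul_besselCoeff_succ (p : ℝ) (n : ℕ) :
    (n + 1) * besselCoeff p (n + 1) = -besselCoeff (p + 1) n := by
  have hn : (n + 1 : ℝ) ≠ 0 := by positivity
  simp only [besselCoeff, Nat.factorial_succ, pow_succ]
  push_cast
  rw [show p + (n + 1) + 1 = p + 1 + n + 1 by ring, mul_assoc, mul_div_assoc',
    mul_div_mul_left _ _ hn]
  ring

theorem besselCoeff_ne_zero (p : ℝ) {n : ℕ} (h : 0 < p + n + 1) : besselCoeff p n ≠ 0 := by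
  have := Gamma_pos_of_pos h
  unfold besselCoeff
  positivity

theorem radius_ofScalars_besselCoeff (p : ℝ) : (ofScalars ℝ (besselCoeff p)).radius = ⊤ := by
  have hlin : Tendsto (fun n : ℕ => p + n + 1) atTop atTop :=
    tendsto_atTop_add_const_right _ 1 <|
      tendsto_atTop_add_const_left _ p tendsto_natCast_atTop_atTop
  have hpos : ∀ᶠ n : ℕ in atTop, 0 < p + n + 1 := hlin.eventually_gt_atTop 0
  refine ofScalars_radius_eq_top_of_tendsto _ _ (hpos.mono fun n h => besselCoeff_ne_zero p h) ?_
  have hratio : ∀ᶠ n : ℕ in atTop,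
      ‖besselCoeff p n.succ‖ / ‖besselCoeff p n‖ = ((n + 1) * (p + n + 1))⁻¹ := by
    filter_upwards [hpos] with n hn
    rw [besselCoeff_succ p n hn.ne', norm_div, norm_neg,
      div_div_cancel_left' (norm_ne_zero_iff.mpr (besselCoeff_ne_zero p hn)),
      Real.norm_of_nonneg (by positivity)]
  refine Tendsto.congr' (EventuallyEq.symm hratio) (tendsto_inv_atTop_zero.comp ?_)
  exact (tendsto_atTop_add_const_right _ 1 tendsto_natCast_atTop_atTop).atTop_mul_atTop₀ hlin

theorem hasDerivAt_besselSeries (p z : ℝ) :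
    HasDerivAt (besselSeries p) (-besselSeries (p + 1) z) z := by
  have h := hasDerivAt_tsum_mul_pow (radius_ofScalars_besselCoeff p) z
  simp only [succ_mul_besselCoeff_succ, neg_mul, tsum_neg] at h
  exact h

theorem confBesselJ_eq_rpow_mul_besselSeries (α q : ℝ) {x : ℝ} (hx : 0 < x) :
    confBesselJ α q x = (x ^ α / 2) ^ q * besselSeries q ((x ^ α / 2) ^ 2) := by
  have hw : 0 < x ^ α / 2 := by positivity
  rw [confBesselJ, besselSeries, ← tsum_mul_left]
  refine tsum_congr fun n => ?_
  rw [rpow_add hw, rpow_mul_natCast hw.le, rpow_two, besselCoeff]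
  ring

theorem rpow_neg_mul_mul_div_two_rpow (α p : ℝ) {x : ℝ} (hx : 0 < x) :
    x ^ (-(p * α)) * (x ^ α / 2) ^ p = 2 ^ (-p) := by
  rw [div_rpow (rpow_nonneg hx.le α) zero_le_two, ← rpow_mul hx.le, rpow_neg hx.le,
    rpow_neg zero_le_two, mul_comm α p, inv_mul_eq_div,
    div_div_cancel_left' (rpow_pos_of_pos hx _).ne']

theorem conformable_bessel_deriv_ii_general (α : ℝ)
    (p : ℝ) (x : ℝ) (hx : 0 < x) :
    confDeriv α (fun t => t ^ (-(p * α)) * confBesselJ α p t) x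
      = -(α * x ^ (-(p * α)) * confBesselJ α (p + 1) x) := by
  have hlocal : (fun t => t ^ (-(p * α)) * confBesselJ α p t)
      =ᶠ[𝓝 x] fun t => 2 ^ (-p) * besselSeries p ((t ^ α / 2) ^ 2) := by
    filter_upwards [Ioi_mem_nhds hx] with t ht
    rw [confBesselJ_eq_rpow_mul_besselSeries α p ht, ← mul_assoc,
      rpow_neg_mul_mul_div_two_rpow α p ht]
  have hinner := ((hasDerivAt_rpow_const (p := α) (Or.inl hx.ne')).div_const 2).fun_pow 2
  have hcancel : x ^ (1 - α) * x ^ (α - 1) = 1 := by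
    rw [← rpow_add hx, sub_add_sub_cancel', sub_self, rpow_zero]
  have hseries : HasDerivAt (fun t => 2 ^ (-p) * besselSeries p ((t ^ α / 2) ^ 2)) _ x :=
    ((hasDerivAt_besselSeries p _).comp x hinner).const_mul _
  rw [confDeriv, hlocal.deriv_eq, hseries.deriv,
    confBesselJ_eq_rpow_mul_besselSeries α (p + 1) hx, rpow_add (by positivity), rpow_one]
  set w := x ^ α / 2
  set G := besselSeries (p + 1) (w ^ 2)
  linear_combination (-2 ^ (-p) * α * w * G) * hcancel
    + (α * w * G) * rpow_neg_mul_mul_div_two_rpow α p hx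

theorem conformable_bessel_deriv_ii (α : ℝ) (hα : α ∈ Set.Ioc (0:ℝ) 1)
    (p : ℝ) (hp : 0 ≤ p) (x : ℝ) (hx : 0 < x) :
    confDeriv α (fun t => t ^ (-(p * α)) * confBesselJ α p t) x
      = -(α * x ^ (-(p * α)) * confBesselJ α (p + 1) x) :=
  conformable_bessel_deriv_ii_general α p x hx
end

section
/- Let α ∈ (0,1] and p ≥ 1 real. For x > 0, the three-term recurrence (J_α)_{p+1}(x) = (2p/x^α)·(J_α)_p(x) − (J_α)_{p−1}(x) holds. -/
open Real

noncomputable def besselTerm (q t : ℝ) (n : ℕ) : ℝ :=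
  ((-1 : ℝ) ^ n / ((n.factorial : ℝ) * Real.Gamma (q + n + 1))) * t ^ (2 * (n : ℝ) + q)

lemma gamma_mul_factorial_le (q : ℝ) (hq : 0 ≤ q) (n : ℕ) :
    Real.Gamma (q + 1) * n.factorial ≤ Real.Gamma (q + n + 1) := by
  induction n with
  | zero => simp
  | succ n ih =>
    have hΓ : 0 < Real.Gamma (q + n + 1) := Real.Gamma_pos_of_pos (by positivity)
    have hne : (q + (n : ℝ) + 1) ≠ 0 := by positivity
    have hrec : Real.Gamma ((q + n + 1) + 1) = (q + n + 1) * Real.Gamma (q + n + 1) :=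
      Real.Gamma_add_one hne
    have heq : q + ((n + 1 : ℕ) : ℝ) + 1 = (q + n + 1) + 1 := by push_cast; ring
    rw [heq, hrec]
    have hfac : (0:ℝ) ≤ n.factorial := by positivity
    have : ((n + 1 : ℕ).factorial : ℝ) = ((n:ℝ) + 1) * n.factorial := by
      rw [Nat.factorial_succ]; push_cast; ring
    rw [this]
    nlinarith [ih, hΓ, hfac]

lemma summable_besselTerm (q t : ℝ) (hq : 0 ≤ q) (ht : 0 < t) :
    Summable (besselTerm q t) := by
  have hΓq : 0 < Real.Gamma (q + 1) := Real.Gamma_pos_of_pos (by linarith)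
  have hsum : Summable (fun n : ℕ => (t ^ q / Real.Gamma (q + 1)) * ((t ^ 2) ^ n / n.factorial)) :=
    (Real.summable_pow_div_factorial (t ^ 2)).mul_left _
  apply Summable.of_norm
  apply Summable.of_nonneg_of_le (fun n => norm_nonneg _) _ hsum
  intro n
  have hΓ : 0 < Real.Gamma (q + n + 1) := Real.Gamma_pos_of_pos (by positivity)
  have hfac : (1:ℝ) ≤ n.factorial := by exact_mod_cast Nat.one_le_iff_ne_zero.mpr n.factorial_ne_zero
  have hkey := gamma_mul_factorial_le q hq n
  have hrpow : t ^ (2 * (n : ℝ) + q) = (t ^ 2) ^ n * t ^ q := by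
    rw [Real.rpow_add ht]
    congr 1
    have h1 : (2 * (n : ℝ)) = ((2 * n : ℕ) : ℝ) := by push_cast; ring
    rw [h1, Real.rpow_natCast, pow_mul]
  have hX : 0 ≤ (t ^ 2) ^ n * t ^ q := by positivity
  have hnorm : ‖besselTerm q t n‖ = ((t ^ 2) ^ n * t ^ q) / (n.factorial * Real.Gamma (q + n + 1)) := by
    unfold besselTerm
    rw [norm_mul, norm_div, norm_pow, norm_neg, norm_one, one_pow,
      Real.norm_of_nonneg (by positivity : (0:ℝ) ≤ (n.factorial : ℝ) * Real.Gamma (q + n + 1)),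
      Real.norm_of_nonneg (Real.rpow_nonneg ht.le _), hrpow]
    ring
  rw [hnorm]
  have h2 : Real.Gamma (q + 1) * n.factorial ≤ (n.factorial : ℝ) * Real.Gamma (q + n + 1) := by
    nlinarith
  calc ((t ^ 2) ^ n * t ^ q) / (n.factorial * Real.Gamma (q + n + 1))
      ≤ ((t ^ 2) ^ n * t ^ q) / (Real.Gamma (q + 1) * n.factorial) := by
        apply div_le_div_of_nonneg_left hX (by positivity) h2
    _ = t ^ q / Real.Gamma (q + 1) * ((t ^ 2) ^ n / n.factorial) := by ring

theorem conformable_bessel_recurrence (α : ℝ) (hα : α ∈ Set.Ioc (0:ℝ) 1)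
    (p : ℝ) (hp : 1 ≤ p) (x : ℝ) (hx : 0 < x) :
    confBesselJ α (p + 1) x
      = (2 * p / x ^ α) * confBesselJ α p x - confBesselJ α (p - 1) x := by
  obtain ⟨hα0, hα1⟩ := hα
  have hxα : 0 < x ^ α := Real.rpow_pos_of_pos hx α
  set t : ℝ := x ^ α / 2 with htdef
  have ht : 0 < t := by positivity
  have hJ : ∀ q : ℝ, confBesselJ α q x = ∑' n : ℕ, besselTerm q t n := fun q => rfl
  set h : ℕ → ℝ := fun n =>
    ((-1 : ℝ) ^ n * n / ((n.factorial : ℝ) * Real.Gamma (p + n + 1)))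
      * t ^ (2 * (n : ℝ) + (p - 1)) with hh
  have hSA : Summable (besselTerm (p + 1) t) := summable_besselTerm _ _ (by linarith) ht
  have hSC : Summable (besselTerm (p - 1) t) := summable_besselTerm _ _ (by linarith) ht
  have hshift : ∀ n : ℕ, h (n + 1) = - besselTerm (p + 1) t n := by
    intro n
    have hΓ : (0:ℝ) < Real.Gamma (p + 1 + n + 1) := Real.Gamma_pos_of_pos (by positivity)
    have hΓeq : Real.Gamma (p + ((n + 1 : ℕ) : ℝ) + 1) = Real.Gamma (p + 1 + n + 1) := by
      push_cast; ring_nf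
    have hfeq : (((n + 1 : ℕ).factorial : ℝ)) = ((n:ℝ) + 1) * n.factorial := by
      rw [Nat.factorial_succ]; push_cast; ring
    have hexp : (2 * (((n + 1 : ℕ)) : ℝ) + (p - 1)) = 2 * (n : ℝ) + (p + 1) := by
      push_cast; ring
    simp only [hh, besselTerm, hexp, hΓeq, hfeq]
    have hne1 : ((n:ℝ) + 1) ≠ 0 := by positivity
    have hfacne : ((n.factorial : ℝ)) ≠ 0 := by positivity
    rw [pow_succ]
    push_cast
    field_simp
  have hSh : Summable h := by
    rw [← summable_nat_add_iff 1]
    simp only [hshift]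
    exact hSA.neg
  have hmain : ∀ n : ℕ, (2 * p / x ^ α) * besselTerm p t n = besselTerm (p - 1) t n - h n := by
    intro n
    have hΓpn : 0 < Real.Gamma (p + n) := Real.Gamma_pos_of_pos (by positivity)
    have hΓrec : Real.Gamma (p + n + 1) = (p + n) * Real.Gamma (p + n) :=
      Real.Gamma_add_one (by positivity)
    have hΓshift : Real.Gamma (p - 1 + n + 1) = Real.Gamma (p + n) := by
      congr 1; ring
    have hexp : t ^ (2 * (n : ℝ) + p) = t ^ (2 * (n : ℝ) + (p - 1)) * t := by
      rw [show 2 * (n : ℝ) + p = (2 * (n : ℝ) + (p - 1)) + 1 by ring,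
        Real.rpow_add_one ht.ne']
    have h2p : 2 * p / x ^ α = p / t := by
      rw [htdef]; field_simp
    simp only [besselTerm, hh, hΓrec, hΓshift, hexp, h2p]
    have hfacne : ((n.factorial : ℝ)) ≠ 0 := by positivity
    have hpn : (p + (n:ℝ)) ≠ 0 := by positivity
    field_simp
    ring
  rw [hJ, hJ, hJ]
  have e1 : (2 * p / x ^ α) * ∑' n, besselTerm p t n
      = ∑' n, (besselTerm (p - 1) t n - h n) := by
    rw [← tsum_mul_left]
    exact tsum_congr hmain
  have e2 : ∑' n, (besselTerm (p - 1) t n - h n)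
      = (∑' n, besselTerm (p - 1) t n) - ∑' n, h n := Summable.tsum_sub hSC hSh
  have e3 : ∑' n, h n = - ∑' n, besselTerm (p + 1) t n := by
    rw [Summable.tsum_eq_zero_add hSh]
    have h0 : h 0 = 0 := by simp [hh]
    rw [h0, zero_add]
    rw [tsum_congr hshift, tsum_neg]
  rw [e1, e2, e3]
  ring
end
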